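/- If a map φ: (M², g) → (Nⁿ, h) from a 2-dimensional Riemannian manifold is f-biharmonic for a positive function f = α, then for any conformal change of metric ḡ = λ²g (λ a positive smooth function), the map φ: (M², ḡ) → (Nⁿ, h) is f-biharmonic for f = αλ². -/

import Mathlib

universe u v

/-- Abstract setting for a fixed map `φ : M² → (Nⁿ, h)` from a two-dimensional
manifold, considered with respect to varying Riemannian metrics on the domain:
`Metric` is the set of Riemannian metrics on `M²`, `rescale f g` is the pointwise
conformal rescaling `f·g` of the metric `g` by a positive function `f`, and
`IsFBiharmonic g f` says that `φ : (M², g) → (Nⁿ, h)` is an `f`-biharmonic map,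
i.e. `f·τ₂(φ) + (Δf)·τ(φ) + 2∇^φ_{grad f}τ(φ) = 0` w.r.t. `g`. -/
structure ConformalSetting (M : Type u) where
  /-- the Riemannian metrics on `M²` -/
  Metric : Type v
  /-- smoothness predicate for real functions on `M` -/
  smooth : (M → ℝ) → Prop
  smooth_const : ∀ c : ℝ, smooth fun _ => c
  /-- pointwise conformal rescaling of a metric by a positive function: `(f, g) ↦ f·g` -/
  rescale : (M → ℝ) → Metric → Metric
  rescale_rescale : ∀ (a b : M → ℝ) (g : Metric),
    rescale a (rescale b g) = rescale (fun x => a x * b x) g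
  rescale_one : ∀ g : Metric, rescale (fun _ => (1 : ℝ)) g = g
  /-- `φ : (M², g) → (Nⁿ, h)` is an `f`-biharmonic map -/
  IsFBiharmonic : Metric → (M → ℝ) → Prop

namespace ConformalSetting

variable {M : Type u} (S : ConformalSetting M)

/-- `φ : (M², g) → (Nⁿ, h)` is a biharmonic map (`f`-biharmonic with `f ≡ 1`). -/
def IsBiharmonic (g : S.Metric) : Prop := S.IsFBiharmonic g fun _ => (1 : ℝ)

/-- **Theorem A** (for two-dimensional domains): `φ : (M², g) → (Nⁿ, h)` is
`f`-biharmonic if and only if `φ : (M², f⁻¹g) → (Nⁿ, h)` is biharmonic. -/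
def ThmA : Prop :=
  ∀ (g : S.Metric) (f : M → ℝ), S.smooth f → (∀ x, 0 < f x) →
    (S.IsFBiharmonic g f ↔ S.IsBiharmonic (S.rescale (fun x => (f x)⁻¹) g))

theorem rescale_inv_mul_rescale {f μ : M → ℝ} (hμ : ∀ x, μ x ≠ 0) (g : S.Metric) :
    S.rescale (fun x => (f x * μ x)⁻¹) (S.rescale μ g) = S.rescale (fun x => (f x)⁻¹) g := by
  rw [S.rescale_rescale]
  congr 1
  funext x
  rw [mul_inv, mul_assoc, inv_mul_cancel₀ (hμ x), mul_one]

/-- On a surface `f`-biharmonicity only depends on the metric `f⁻¹g`, which is unchanged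
by `(g, f) ↦ (μg, fμ)`. -/
theorem isFBiharmonic_rescale_mul_iff (hA : S.ThmA) {g : S.Metric} {f μ : M → ℝ}
    (hf : S.smooth f) (hfpos : ∀ x, 0 < f x) (hfμ : S.smooth fun x => f x * μ x)
    (hμpos : ∀ x, 0 < μ x) :
    S.IsFBiharmonic (S.rescale μ g) (fun x => f x * μ x) ↔ S.IsFBiharmonic g f := by
  rw [hA _ _ hfμ fun x => mul_pos (hfpos x) (hμpos x), hA g f hf hfpos,
    S.rescale_inv_mul_rescale fun x => (hμpos x).ne']

end ConformalSetting

theorem fBiharmonic_conformal_invariance_general {M : Type u} (S : ConformalSetting M)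
    (hA : S.ThmA) (g : S.Metric) (α lam : M → ℝ)
    (hαsm : S.smooth α) (hαpos : ∀ x, 0 < α x)
    (hlpos : ∀ x, 0 < lam x)
    (hmul : S.smooth fun x => α x * lam x ^ 2)
    (hfb : S.IsFBiharmonic g α) :
    S.IsFBiharmonic (S.rescale (fun x => lam x ^ 2) g) (fun x => α x * lam x ^ 2) :=
  (S.isFBiharmonic_rescale_mul_iff hA hαsm hαpos hmul fun x => pow_pos (hlpos x) 2).mpr hfb

/-- If a map `φ : (M², g) → (Nⁿ, h)` from a 2-dimensional Riemannian
manifold is `f`-biharmonic for a positive function `f = α`, then for any conformal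
change of metric `ḡ = λ²g` (`λ` a positive smooth function), the map
`φ : (M², ḡ) → (Nⁿ, h)` is `f`-biharmonic for `f = αλ²`. -/
theorem fBiharmonic_conformal_invariance {M : Type u} (S : ConformalSetting M)
    (hA : S.ThmA) (g : S.Metric) (α lam : M → ℝ)
    (hαsm : S.smooth α) (hαpos : ∀ x, 0 < α x)
    (hlsm : S.smooth fun x => lam x ^ 2) (hlpos : ∀ x, 0 < lam x)
    (hmul : S.smooth fun x => α x * lam x ^ 2)
    (hfb : S.IsFBiharmonic g α) :
    S.IsFBiharmonic (S.rescale (fun x => lam x ^ 2) g) (fun x => α x * lam x ^ 2) :=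
  fBiharmonic_conformal_invariance_general S hA g α lam hαsm hαpos hlpos hmul hfb
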